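/- Let G = (X, E, δ, X₀) be an NFA with observable events E_o, secret states X_S, and natural projection P. Then G is infinite-step strong opaque if and only if G is K-step strong opaque for every K ≥ 0. -/
import Mathlib


namespace Opacity

variable {X E : Type*}

/-- Extension of a nondeterministic transition function `δ : X × E → Set X`
to strings: `dStr δ x ε = {x}` and `dStr δ x (e·s) = ⋃ x' ∈ δ x e, dStr δ x' s`. -/
def dStr (δ : X → E → Set X) : X → List E → Set X
  | x, [] => {x}
  | x, e :: s => ⋃ x' ∈ δ x e, dStr δ x' s

/-- Extension of the transition function to sets of states. -/
def dSet (δ : X → E → Set X) (Q : Set X) (s : List E) : Set X :=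
  ⋃ x ∈ Q, dStr δ x s

/-- The natural projection `P : E* → E_o*`, deleting all unobservable events. -/
noncomputable def proj (Eo : Set E) : List E → List E
  | [] => []
  | e :: s => @ite _ (e ∈ Eo) (Classical.propDecidable _) (e :: proj Eo s) (proj Eo s)

/-- Unobservable reach `UR(Q)`. -/
def UR (δ : X → E → Set X) (Eo : Set E) (Q : Set X) : Set X :=
  {x' | ∃ x ∈ Q, ∃ s : List E, x' ∈ dStr δ x s ∧ proj Eo s = []}

/-- Observable reach `R(Q, e_o)` via one observable event. -/
def oR (δ : X → E → Set X) (Eo : Set E) (Q : Set X) (eo : E) : Set X :=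
  {x | ∃ x' ∈ Q, ∃ s : List E, x ∈ dStr δ x' s ∧ proj Eo s = [eo]}

/-- The observer's transition function `f_obs(q, e_o) = R(q, e_o)`, extended to
observation sequences.  It is totalized: since `R(∅, e_o) = ∅`, the partial
function `f_obs` is defined on `(q, w)` exactly when `fobs δ Eo q w` is nonempty. -/
def fobs (δ : X → E → Set X) (Eo : Set E) : Set X → List E → Set X
  | q, [] => q
  | q, e :: w => fobs δ Eo (oR δ Eo q e) w

/-- The state set `X_obs` of the observer: the (nonempty) subsets of `X`
reachable from the initial observer state `UR(X₀)`. -/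
def Xobs (δ : X → E → Set X) (Eo : Set E) (X0 : Set X) : Set (Set X) :=
  {q | ∃ w : List E, fobs δ Eo (UR δ Eo X0) w = q ∧ q.Nonempty}

/-- `y` is a run of the automaton from `x` over the string `s`:
`y 0 = x` and `y (j+1) ∈ δ (y j) (s[j])` for all `j < |s|`. -/
def IsRun (δ : X → E → Set X) (x : X) (s : List E) (y : ℕ → X) : Prop :=
  y 0 = x ∧ ∀ j : Fin s.length, y (j.val + 1) ∈ δ (y j.val) (s.get j)

/-- There is a non-secret run of the automaton from `x` to `x'` over `s`
(all states of the run except possibly the first one are non-secret). -/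
def NonSecretRunTo (δ : X → E → Set X) (XS : Set X) (x : X) (s : List E) (x' : X) : Prop :=
  ∃ y : ℕ → X, IsRun δ x s y ∧ (∀ j, 1 ≤ j → j ≤ s.length → y j ∉ XS) ∧ y s.length = x'

/-- `K`-step weak opacity. -/
def KStepWeakOpaque (δ : X → E → Set X) (Eo : Set E) (X0 XS : Set X) (K : ℕ) : Prop :=
  ∀ x0 ∈ X0, ∀ s t : List E,
    (dStr δ x0 (s ++ t)).Nonempty →
    (dStr δ x0 s ∩ XS).Nonempty →
    (dSet δ (dStr δ x0 s ∩ XS) t).Nonempty →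
    (proj Eo t).length ≤ K →
    ∃ x0' ∈ X0, ∃ s' t' : List E,
      (dStr δ x0' (s' ++ t')).Nonempty ∧
      proj Eo s' = proj Eo s ∧ proj Eo t' = proj Eo t ∧
      (dStr δ x0' s' ∩ XSᶜ).Nonempty ∧
      (dSet δ (dStr δ x0' s' ∩ XSᶜ) t').Nonempty

/-- Infinite-step weak opacity. -/
def InfStepWeakOpaque (δ : X → E → Set X) (Eo : Set E) (X0 XS : Set X) : Prop :=
  ∀ x0 ∈ X0, ∀ s t : List E,
    (dStr δ x0 (s ++ t)).Nonempty →
    (dStr δ x0 s ∩ XS).Nonempty →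
    (dSet δ (dStr δ x0 s ∩ XS) t).Nonempty →
    ∃ x0' ∈ X0, ∃ s' t' : List E,
      (dStr δ x0' (s' ++ t')).Nonempty ∧
      proj Eo s' = proj Eo s ∧ proj Eo t' = proj Eo t ∧
      (dStr δ x0' s' ∩ XSᶜ).Nonempty ∧
      (dSet δ (dStr δ x0' s' ∩ XSᶜ) t').Nonempty

/-- `K`-step strong opacity. -/
def KStepStrongOpaque (δ : X → E → Set X) (Eo : Set E) (X0 XS : Set X) (K : ℕ) : Prop :=
  ∀ x0 ∈ X0, ∀ s t : List E,
    (dStr δ x0 (s ++ t)).Nonempty →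
    (dStr δ x0 s ∩ XS).Nonempty →
    (dSet δ (dStr δ x0 s ∩ XS) t).Nonempty →
    (proj Eo t).length ≤ K →
    ∃ x0' ∈ X0, ∃ ω : List E,
      (dStr δ x0' ω).Nonempty ∧
      proj Eo ω = proj Eo (s ++ t) ∧
      ∃ y : ℕ → X, IsRun δ x0' ω y ∧
        ∀ j ≤ ω.length,
          (proj Eo ω).length - (proj Eo (ω.take j)).length ≤ K → y j ∉ XS

/-- Infinite-step strong opacity. -/
def InfStepStrongOpaque (δ : X → E → Set X) (Eo : Set E) (X0 XS : Set X) : Prop :=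
  ∀ x0 ∈ X0, ∀ s t : List E,
    (dStr δ x0 (s ++ t)).Nonempty →
    (dStr δ x0 s ∩ XS).Nonempty →
    (dSet δ (dStr δ x0 s ∩ XS) t).Nonempty →
    ∃ x0' ∈ X0 ∩ XSᶜ, ∃ ω : List E,
      (dStr δ x0' ω).Nonempty ∧
      proj Eo ω = proj Eo (s ++ t) ∧
      ∃ y : ℕ → X, IsRun δ x0' ω y ∧ ∀ j ≤ ω.length, y j ∉ XS

/-- Child of a node `(x₁, x₂)` of a state-tree associated with observer state `q'`,
via observable event `e`. -/
def treeChild (δ : X → E → Set X) (Eo : Set E) (q' : Set X) (n : Set X × Set X)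
    (e : E) : Set X × Set X :=
  ({x ∈ oR δ Eo q' e | ∃ x' ∈ n.1, x ∈ oR δ Eo {x'} e},
   {x ∈ oR δ Eo q' e | ∃ x' ∈ n.2, x ∈ oR δ Eo {x'} e})

/-- Descend in a state-tree from node `n` (associated with observer state `q'`)
along the observation sequence `w`. -/
def treeNodeAux (δ : X → E → Set X) (Eo : Set E) :
    Set X → Set X × Set X → List E → Set X × Set X
  | _, n, [] => n
  | q', n, e :: w => treeNodeAux δ Eo (oR δ Eo q' e) (treeChild δ Eo q' n e) w

/-- The node of the state-tree rooted at observer state `q` reached from the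
root `(q ∩ X_S, q ∩ X_NS)` along the observation sequence `w`. -/
def treeNode (δ : X → E → Set X) (Eo : Set E) (XS : Set X) (q : Set X)
    (w : List E) : Set X × Set X :=
  treeNodeAux δ Eo q (q ∩ XS, q ∩ XSᶜ) w

/-- `X_st`: all nodes of the depth-`K` state-trees rooted at observer states
intersecting the secret states. -/
def Xst (δ : X → E → Set X) (Eo : Set E) (X0 XS : Set X) (K : ℕ) :
    Set (Set X × Set X) :=
  {n | ∃ q ∈ Xobs δ Eo X0, (q ∩ XS).Nonempty ∧
    ∃ w : List E, w.length ≤ K ∧ (fobs δ Eo q w).Nonempty ∧ treeNode δ Eo XS q w = n}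

/-- Initial states of the secret-involved projected automaton.  A state of
`G_SP` is a pair `(x, b)` where `b = false` encodes the tag `N` and `b = true`
encodes the tag `Y`. -/
def SPinit (δ : X → E → Set X) (Eo : Set E) (X0 XS : Set X) : Set (X × Bool) :=
  {p | p.1 ∈ UR δ Eo X0 ∧
    (p.2 = false ↔
      ∃ x0 ∈ X0 ∩ XSᶜ, ∃ s : List E, proj Eo s = [] ∧ NonSecretRunTo δ XS x0 s p.1)}

/-- Transition relation of the secret-involved projected automaton. -/
def SPtrans (δ : X → E → Set X) (Eo : Set E) (XS : Set X) (p : X × Bool) (e : E) :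
    Set (X × Bool) :=
  {p' | p'.1 ∈ oR δ Eo {p.1} e ∧
    ((p.1 ∉ XS ∧
        (p'.2 = false ↔ ∃ s : List E, proj Eo s = [e] ∧ NonSecretRunTo δ XS p.1 s p'.1)) ∨
     (p.1 ∈ XS ∧ p.2 = true ∧ p'.2 = true))}

/-- `X_SP`: states of the secret-involved projected automaton reachable from
its initial states. -/
def XSP (δ : X → E → Set X) (Eo : Set E) (X0 XS : Set X) : Set (X × Bool) :=
  {p | ∃ p0 ∈ SPinit δ Eo X0 XS, ∃ w : List E, p ∈ dStr (SPtrans δ Eo XS) p0 w}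

/-- Child of a node `(x₁, x₂)` of a secret-unvisited state-tree associated with
observer state `q'`, via observable event `e`. -/
def sstChild (δ : X → E → Set X) (Eo : Set E) (XS : Set X) (q' : Set X)
    (n : Set X × Set X) (e : E) : Set X × Set X :=
  (oR δ Eo q' e,
   {x ∈ oR δ Eo q' e | ∃ x' ∈ n.2,
      x ∈ oR δ Eo {x'} e ∧ (x, false) ∈ SPtrans δ Eo XS (x', false) e})

/-- Descend in a secret-unvisited state-tree from node `n` (associated with
observer state `q'`) along the observation sequence `w`. -/
def sstNodeAux (δ : X → E → Set X) (Eo : Set E) (XS : Set X) :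
    Set X → Set X × Set X → List E → Set X × Set X
  | _, n, [] => n
  | q', n, e :: w => sstNodeAux δ Eo XS (oR δ Eo q' e) (sstChild δ Eo XS q' n e) w

/-- The node of the secret-unvisited state-tree (SST) rooted at observer state
`q` reached from the root `(q, {x ∈ q ∩ X_NS : x_N ∈ X_SP})` along the
observation sequence `w`. -/
def sstNode (δ : X → E → Set X) (Eo : Set E) (X0 XS : Set X) (q : Set X)
    (w : List E) : Set X × Set X :=
  sstNodeAux δ Eo XS q
    (q, {x | x ∈ q ∧ x ∉ XS ∧ (x, false) ∈ XSP δ Eo X0 XS}) w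

/-- `X_st^G`: all nodes of the depth-`K` SSTs rooted at observer states
intersecting the secret states. -/
def XstSST (δ : X → E → Set X) (Eo : Set E) (X0 XS : Set X) (K : ℕ) :
    Set (Set X × Set X) :=
  {n | ∃ q ∈ Xobs δ Eo X0, (q ∩ XS).Nonempty ∧
    ∃ w : List E, w.length ≤ K ∧ (fobs δ Eo q w).Nonempty ∧ sstNode δ Eo X0 XS q w = n}

/-- Initial state of the verifier. -/
def vInit (δ : X → E → Set X) (Eo : Set E) (X0 XS : Set X) : Set X × Set X :=
  (UR δ Eo X0, {x ∈ UR δ Eo X0 | (x, false) ∈ SPinit δ Eo X0 XS})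

/-- Transition function of the verifier, extended to observation sequences
(totalized: the verifier step is defined exactly when the corresponding
observer step is, i.e. exactly when the first component stays nonempty). -/
def fv (δ : X → E → Set X) (Eo : Set E) (XS : Set X) :
    Set X × Set X → List E → Set X × Set X
  | v, [] => v
  | v, e :: w => fv δ Eo XS
      (oR δ Eo v.1 e,
       {x' ∈ oR δ Eo v.1 e | ∃ x ∈ v.2, (x', false) ∈ SPtrans δ Eo XS (x, false) e}) w

/-- `X_v`: the verifier states reachable from the initial verifier state. -/
def Xv (δ : X → E → Set X) (Eo : Set E) (X0 XS : Set X) : Set (Set X × Set X) :=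
  {v | ∃ w : List E, fv δ Eo XS (vInit δ Eo X0 XS) w = v ∧ v.1.Nonempty}

end Opacity

open Opacity

theorem proj_append {E : Type*} (Eo : Set E) (s t : List E) :
    proj Eo (s ++ t) = proj Eo s ++ proj Eo t := by
  induction s with
  | nil => simp [proj]
  | cons e s ih =>
    simp only [List.cons_append, proj, ih]
    split <;> simp [ih]

/-- An NFA `G` is infinite-step strong opaque if and only if it is
`K`-step strong opaque for every `K ≥ 0`. -/
theorem infStepStrongOpaque_iff_forall_kStepStrongOpaque
    {X E : Type*} [Finite X] [Finite E]
    (δ : X → E → Set X) (Eo : Set E) (X0 XS : Set X) :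
    InfStepStrongOpaque δ Eo X0 XS ↔ ∀ K : ℕ, KStepStrongOpaque δ Eo X0 XS K := by
  constructor
  · intro h K x0 hx0 s t h1 h2 h3 _
    obtain ⟨x0', hx0', ω, hne, hproj, y, hrun, hsec⟩ := h x0 hx0 s t h1 h2 h3
    exact ⟨x0', hx0'.1, ω, hne, hproj, y, hrun, fun j hj _ => hsec j hj⟩
  · intro h x0 hx0 s t h1 h2 h3
    obtain ⟨x0', hx0', ω, hne, hproj, y, hrun, hsec⟩ :=
      h (proj Eo (s ++ t)).length x0 hx0 s t h1 h2 h3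
        (by rw [proj_append]; simp)
    have hall : ∀ j ≤ ω.length, y j ∉ XS := fun j hj =>
      hsec j hj (by rw [hproj]; exact Nat.sub_le _ _)
    refine ⟨x0', ⟨hx0', ?_⟩, ω, hne, hproj, y, hrun, hall⟩
    have := hall 0 (Nat.zero_le _)
    rwa [hrun.1] at this
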